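/- arXiv:2604.23158 — 2 statements merged into one kernel-verified Lean document; each statement's English description precedes it below -/
import Mathlib

section
/- Let Z be a Banach space and f ∈ C_b¹(ℝ, Z) ∩ L²(ℝ, Z). Then for every t ∈ ℝ the principal-value limit Hf(t) = (1/π) lim_{ε→0} ∫_{ε<|t-s|<1/ε} f(s)/(t-s) ds exists, and the resulting function Hf belongs to C_b(ℝ, Z). -/
open MeasureTheory Filter Topology Set

noncomputable def hilbG {Z : Type*} [NormedAddCommGroup Z] [NormedSpace ℝ Z]
    (f : ℝ → Z) (t u : ℝ) : Z :=
  u⁻¹ • (f (t - u) - Set.indicator {v : ℝ | |v| < 1} (fun _ => f t) u)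

lemma measB : MeasurableSet {v : ℝ | |v| < 1} :=
  measurableSet_lt (measurable_id.abs) measurable_const

lemma measBc : MeasurableSet {v : ℝ | 1 ≤ |v|} :=
  measurableSet_le measurable_const (measurable_id.abs)

lemma volB_lt_top : volume {v : ℝ | |v| < 1} < ⊤ := by
  have h : {v : ℝ | |v| < 1} = Set.Ioo (-1 : ℝ) 1 := by ext v; simp [abs_lt]
  rw [h]; exact measure_Ioo_lt_top

lemma amgm (a b : ℝ) : a * b ≤ (a ^ 2 + b ^ 2) / 2 := by nlinarith [sq_nonneg (a - b)]

lemma invsq_Ici (c : ℝ) (hc : 0 < c) : IntegrableOn (fun u : ℝ => (u ^ 2)⁻¹) (Set.Ici c) := by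
  rw [integrableOn_Ici_iff_integrableOn_Ioi]
  have := integrableOn_Ioi_rpow_of_lt (a := -2) (by norm_num) hc
  apply this.congr_fun ?_ measurableSet_Ioi
  intro x hx
  show x ^ ((-2 : ℝ)) = (x ^ 2)⁻¹
  rw [Real.rpow_neg (le_of_lt (hc.trans hx)), Real.rpow_two]

lemma invsq_abs (c : ℝ) (hc : 0 < c) : IntegrableOn (fun u : ℝ => (u ^ 2)⁻¹) {u : ℝ | c ≤ |u|} := by
  have h1 := invsq_Ici c hc
  have h2 : IntegrableOn (fun u : ℝ => (u ^ 2)⁻¹) (Set.Iic (-c)) := by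
    have := ((integrable_indicator_iff measurableSet_Ici).mpr h1).comp_neg
    rw [← integrable_indicator_iff measurableSet_Iic]
    apply this.congr
    filter_upwards with x
    by_cases hx : x ≤ -c
    · simp [Set.indicator_of_mem, hx, Set.mem_Ici, neg_neg, (by linarith : c ≤ -x)]
    · have : ¬ (c ≤ -x) := by linarith
      simp [Set.indicator_of_notMem, hx, this]
  have hset : {u : ℝ | c ≤ |u|} = Set.Iic (-c) ∪ Set.Ici c := by
    ext u
    simp only [Set.mem_setOf_eq, Set.mem_union, Set.mem_Iic, Set.mem_Ici, le_abs]
    constructor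
    · rintro (h | h)
      · right; exact h
      · left; linarith
    · rintro (h | h)
      · right; linarith
      · left; exact h
  rw [hset]
  exact h2.union h1

lemma odd_integral_zero {S : Set ℝ} (hS : MeasurableSet S) (hsymm : ∀ u, u ∈ S ↔ -u ∈ S) :
    ∫ u in S, u⁻¹ = 0 := by
  have h1 : (∫ u in S, u⁻¹) = ∫ u, S.indicator (fun u => u⁻¹) u := (integral_indicator hS).symm
  have h2 := MeasureTheory.integral_neg_eq_self (S.indicator (fun u : ℝ => u⁻¹)) volume
  have h3 : ∀ u : ℝ, S.indicator (fun u : ℝ => u⁻¹) (-u) = - S.indicator (fun u : ℝ => u⁻¹) u := by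
    intro u
    by_cases h : u ∈ S
    · rw [Set.indicator_of_mem ((hsymm u).mp h), Set.indicator_of_mem h, inv_neg]
    · rw [Set.indicator_of_notMem (fun hc => h ((hsymm u).mpr hc)),
        Set.indicator_of_notMem h, neg_zero]
  simp_rw [h3, integral_neg] at h2
  rw [h1]
  linarith

lemma annulus_meas (ε : ℝ) : MeasurableSet {u : ℝ | ε < |u| ∧ |u| < ε⁻¹} :=
  (measurableSet_lt measurable_const measurable_id.abs).inter
    (measurableSet_lt measurable_id.abs measurable_const)

lemma annulus_vol (ε : ℝ) : volume {u : ℝ | ε < |u| ∧ |u| < ε⁻¹} < ⊤ := by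
  refine lt_of_le_of_lt (measure_mono ?_) (measure_Ioo_lt_top (a := -ε⁻¹) (b := ε⁻¹))
  intro u hu
  exact Set.mem_Ioo.mpr (abs_lt.mp hu.2)

section
variable {Z : Type*} [NormedAddCommGroup Z] [NormedSpace ℝ Z] [CompleteSpace Z]

lemma hilbG_sm {f : ℝ → Z} (hf : Continuous f) (t : ℝ) : StronglyMeasurable (hilbG f t) :=
  (measurable_inv.stronglyMeasurable).smul
    (((hf.comp (continuous_const.sub continuous_id)).stronglyMeasurable).sub
      (stronglyMeasurable_const.indicator measB))

lemma hilbG_bound_inner {f : ℝ → Z} {L : ℝ} (hL0 : 0 ≤ L)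
    (hLip : ∀ x y, ‖f x - f y‖ ≤ L * |x - y|) (t u : ℝ) (hu : |u| < 1) :
    ‖hilbG f t u‖ ≤ L := by
  rcases eq_or_ne u 0 with rfl | hu0
  · simp [hilbG, hL0]
  · rw [hilbG, Set.indicator_of_mem (show u ∈ {v : ℝ | |v| < 1} from hu), norm_smul, norm_inv,
      Real.norm_eq_abs]
    have h1 : ‖f (t - u) - f t‖ ≤ L * |u| := by
      have := hLip (t - u) t
      simpa using this
    have habs : (0:ℝ) < |u| := abs_pos.mpr hu0
    calc |u|⁻¹ * ‖f (t - u) - f t‖ ≤ |u|⁻¹ * (L * |u|) :=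
          mul_le_mul_of_nonneg_left h1 (by positivity)
      _ = L := by field_simp

lemma hilbG_eq_outer {f : ℝ → Z} (t u : ℝ) (hu : ¬ |u| < 1) :
    hilbG f t u = u⁻¹ • f (t - u) := by
  rw [hilbG, Set.indicator_of_notMem (by simpa using hu), sub_zero]

lemma outer_bound {f : ℝ → Z} (t u : ℝ) :
    ‖u⁻¹ • f (t - u)‖ ≤ ((u ^ 2)⁻¹ + ‖f (t - u)‖ ^ 2) / 2 := by
  rw [norm_smul, Real.norm_eq_abs, abs_inv]
  have h := amgm (|u|⁻¹) ‖f (t - u)‖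
  rwa [inv_pow, sq_abs] at h

lemma fsq_integrable {f : ℝ → Z} (hL2 : MemLp f 2 volume) :
    Integrable (fun x => ‖f x‖ ^ 2) := by
  have := hL2.integrable_norm_rpow two_ne_zero ENNReal.ofNat_ne_top
  simpa [ENNReal.toReal_ofNat, Real.rpow_two] using this

lemma hilbG_integrable {f : ℝ → Z} (hf : Continuous f) {L : ℝ} (hL0 : 0 ≤ L)
    (hLip : ∀ x y, ‖f x - f y‖ ≤ L * |x - y|) (hL2 : MemLp f 2 volume) (t : ℝ) :
    Integrable (hilbG f t) := by
  have hsm := hilbG_sm hf t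
  rw [← integrableOn_univ, ← Set.union_compl_self {v : ℝ | |v| < 1}]
  apply IntegrableOn.union
  · apply Integrable.mono' (integrableOn_const volB_lt_top.ne)
      hsm.aestronglyMeasurable.restrict
    rw [ae_restrict_iff' measB]
    exact ae_of_all _ fun u hu => hilbG_bound_inner hL0 hLip t u hu
  · have hC : {v : ℝ | |v| < 1}ᶜ = {u : ℝ | 1 ≤ |u|} := by ext u; simp [not_lt]
    rw [hC]
    have hb : IntegrableOn (fun u : ℝ => ((u ^ 2)⁻¹ + ‖f (t - u)‖ ^ 2) / 2) {u : ℝ | 1 ≤ |u|} :=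
      ((invsq_abs 1 one_pos).add ((fsq_integrable hL2).comp_sub_left t).integrableOn).div_const 2
    apply Integrable.mono' hb hsm.aestronglyMeasurable.restrict
    rw [ae_restrict_iff' measBc]
    refine ae_of_all _ fun u hu => ?_
    rw [hilbG_eq_outer t u (by simp only [not_lt]; exact hu)]
    exact outer_bound t u

lemma annulus_eq {f : ℝ → Z} (hf : Continuous f) {M : ℝ}
    (hM : ∀ x, ‖f x‖ ≤ M) (t ε : ℝ) (hε : 0 < ε) :
    (∫ s in {s : ℝ | ε < |t - s| ∧ |t - s| < ε⁻¹}, (t - s)⁻¹ • f s)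
      = ∫ u in {u : ℝ | ε < |u| ∧ |u| < ε⁻¹}, hilbG f t u := by
  set A := {u : ℝ | ε < |u| ∧ |u| < ε⁻¹} with hA
  have hAmeas := annulus_meas ε
  have hAvol := annulus_vol ε
  have hS : MeasurableSet {s : ℝ | ε < |t - s| ∧ |t - s| < ε⁻¹} :=
    (measurableSet_lt measurable_const ((measurable_const.sub measurable_id).abs)).inter
      (measurableSet_lt ((measurable_const.sub measurable_id).abs) measurable_const)
  have step1 : (∫ s in {s : ℝ | ε < |t - s| ∧ |t - s| < ε⁻¹}, (t - s)⁻¹ • f s)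
      = ∫ u in A, u⁻¹ • f (t - u) := by
    rw [← integral_indicator hS, ← integral_indicator hAmeas]
    have key : ∀ s : ℝ,
        Set.indicator {s : ℝ | ε < |t - s| ∧ |t - s| < ε⁻¹} (fun s => (t - s)⁻¹ • f s) s
        = Set.indicator A (fun u => u⁻¹ • f (t - u)) (t - s) := by
      intro s
      by_cases h : ε < |t - s| ∧ |t - s| < ε⁻¹
      · rw [Set.indicator_of_mem (show s ∈ {s : ℝ | ε < |t - s| ∧ |t - s| < ε⁻¹} from h),
          Set.indicator_of_mem (show (t - s) ∈ A from h)]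
        simp [sub_sub_cancel]
      · rw [Set.indicator_of_notMem (show s ∉ {s : ℝ | ε < |t - s| ∧ |t - s| < ε⁻¹} from h),
          Set.indicator_of_notMem (show (t - s) ∉ A from h)]
    simp_rw [key]
    exact integral_sub_left_eq_self (fun u => Set.indicator A (fun u => u⁻¹ • f (t - u)) u) volume t
  have hI1 : IntegrableOn (fun u : ℝ => u⁻¹ • f (t - u)) A := by
    refine Integrable.mono' (g := fun _ => ε⁻¹ * M) (integrableOn_const hAvol.ne)
      ((measurable_inv.stronglyMeasurable.smul
        (hf.comp (continuous_const.sub continuous_id)).stronglyMeasurable).aestronglyMeasurable.restrict) ?_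
    rw [ae_restrict_iff' hAmeas]
    refine ae_of_all _ fun u hu => ?_
    rw [norm_smul, norm_inv, Real.norm_eq_abs]
    have h1 : |u|⁻¹ ≤ ε⁻¹ := inv_anti₀ hε (le_of_lt hu.1)
    exact mul_le_mul h1 (hM _) (norm_nonneg _) (by positivity)
  have hI2 : IntegrableOn (fun u : ℝ => Set.indicator {v : ℝ | |v| < 1}
      (fun v : ℝ => v⁻¹ • f t) u) A := by
    refine Integrable.mono' (g := fun _ => ε⁻¹ * ‖f t‖) (integrableOn_const hAvol.ne)
      (((measurable_inv.stronglyMeasurable.smul stronglyMeasurable_const).indicator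
        measB).aestronglyMeasurable.restrict) ?_
    rw [ae_restrict_iff' hAmeas]
    refine ae_of_all _ fun u hu => ?_
    by_cases h : |u| < 1
    · rw [Set.indicator_of_mem (show u ∈ {v : ℝ | |v| < 1} from h), norm_smul, norm_inv,
        Real.norm_eq_abs]
      have h1 : |u|⁻¹ ≤ ε⁻¹ := inv_anti₀ hε (le_of_lt hu.1)
      exact mul_le_mul h1 le_rfl (norm_nonneg _) (by positivity)
    · rw [Set.indicator_of_notMem (show u ∉ {v : ℝ | |v| < 1} from h), norm_zero]
      positivity
  have split : ∀ u : ℝ, u⁻¹ • f (t - u)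
      = hilbG f t u + Set.indicator {v : ℝ | |v| < 1} (fun v : ℝ => v⁻¹ • f t) u := by
    intro u
    by_cases h : |u| < 1
    · rw [hilbG, Set.indicator_of_mem (show u ∈ {v : ℝ | |v| < 1} from h),
        Set.indicator_of_mem (show u ∈ {v : ℝ | |v| < 1} from h), smul_sub]
      abel
    · rw [hilbG_eq_outer t u h,
        Set.indicator_of_notMem (show u ∉ {v : ℝ | |v| < 1} from h), add_zero]
  have hGA : IntegrableOn (hilbG f t) A := by
    have hfn : hilbG f t = fun u => u⁻¹ • f (t - u)
        - Set.indicator {v : ℝ | |v| < 1} (fun v : ℝ => v⁻¹ • f t) u := by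
      funext u
      rw [split u]; abel
    rw [hfn]; exact hI1.sub hI2
  have step2 : (∫ u in A, u⁻¹ • f (t - u)) = ∫ u in A, hilbG f t u := by
    calc (∫ u in A, u⁻¹ • f (t - u))
        = ∫ u in A, (hilbG f t u
            + Set.indicator {v : ℝ | |v| < 1} (fun v : ℝ => v⁻¹ • f t) u) := by
          simp_rw [split]
      _ = (∫ u in A, hilbG f t u)
            + ∫ u in A, Set.indicator {v : ℝ | |v| < 1} (fun v : ℝ => v⁻¹ • f t) u :=
          integral_add hGA hI2
      _ = ∫ u in A, hilbG f t u := by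
          rw [setIntegral_indicator measB, integral_smul_const,
            odd_integral_zero ((annulus_meas ε).inter measB) ?_, zero_smul, add_zero]
          intro u
          simp only [Set.mem_inter_iff, hA, Set.mem_setOf_eq, abs_neg]
  rw [step1, step2]

lemma tendsto_annulus {f : ℝ → Z} (hf : Continuous f) {L : ℝ} (hL0 : 0 ≤ L)
    (hLip : ∀ x y, ‖f x - f y‖ ≤ L * |x - y|) (hL2 : MemLp f 2 volume) (t : ℝ) :
    Tendsto (fun ε : ℝ => ∫ u in {u : ℝ | ε < |u| ∧ |u| < ε⁻¹}, hilbG f t u)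
      (𝓝[>] (0:ℝ)) (𝓝 (∫ u, hilbG f t u)) := by
  have hint := hilbG_integrable hf hL0 hLip hL2 t
  have main : Tendsto (fun ε : ℝ => ∫ u, Set.indicator {u : ℝ | ε < |u| ∧ |u| < ε⁻¹}
      (hilbG f t) u) (𝓝[>] (0:ℝ)) (𝓝 (∫ u, hilbG f t u)) := by
    apply tendsto_integral_filter_of_dominated_convergence (bound := fun u => ‖hilbG f t u‖)
    · exact Eventually.of_forall fun ε => hint.aestronglyMeasurable.indicator (annulus_meas ε)
    · exact Eventually.of_forall fun ε => ae_of_all _ fun u => norm_indicator_le_norm_self _ u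
    · exact hint.norm
    · have hae : ∀ᵐ u : ℝ, u ≠ 0 := by
        rw [ae_iff]
        refine measure_mono_null ?_ (measure_singleton (0:ℝ))
        intro u hu
        simpa using hu
      filter_upwards [hae] with u hu
      have hc : 0 < min |u| |u|⁻¹ := lt_min (abs_pos.mpr hu) (by positivity)
      have hev : ∀ᶠ ε in 𝓝[>] (0:ℝ),
          Set.indicator {u' : ℝ | ε < |u'| ∧ |u'| < ε⁻¹} (hilbG f t) u = hilbG f t u := by
        filter_upwards [Ioo_mem_nhdsGT_of_mem (Set.left_mem_Ico.mpr hc)] with ε hε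
        apply Set.indicator_of_mem
        constructor
        · exact lt_of_lt_of_le hε.2 (min_le_left _ _)
        · have h2 : ε < |u|⁻¹ := lt_of_lt_of_le hε.2 (min_le_right _ _)
          calc |u| = (|u|⁻¹)⁻¹ := (inv_inv _).symm
            _ < ε⁻¹ := inv_strictAnti₀ hε.1 h2
      exact Tendsto.congr' (hev.mono fun ε h => h.symm) tendsto_const_nhds
  have heq : (fun ε : ℝ => ∫ u in {u : ℝ | ε < |u| ∧ |u| < ε⁻¹}, hilbG f t u)
      = fun ε : ℝ => ∫ u, Set.indicator {u : ℝ | ε < |u| ∧ |u| < ε⁻¹} (hilbG f t) u :=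
    funext fun ε => (integral_indicator (annulus_meas ε)).symm
  rw [heq]
  exact main

lemma cont_inner {f : ℝ → Z} (hf : Continuous f) {L : ℝ} (hL0 : 0 ≤ L)
    (hLip : ∀ x y, ‖f x - f y‖ ≤ L * |x - y|) :
    Continuous (fun t => ∫ u in {v : ℝ | |v| < 1}, hilbG f t u) := by
  apply continuous_of_dominated (bound := fun _ => L)
  · exact fun t => (hilbG_sm hf t).aestronglyMeasurable.restrict
  · intro t
    rw [ae_restrict_iff' measB]
    exact ae_of_all _ fun u hu => hilbG_bound_inner hL0 hLip t u hu
  · exact integrableOn_const volB_lt_top.ne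
  · refine ae_of_all _ fun u => ?_
    by_cases h : |u| < 1
    · have heq : (fun t => hilbG f t u) = fun t => u⁻¹ • (f (t - u) - f t) := by
        funext t
        rw [hilbG, Set.indicator_of_mem (show u ∈ {v : ℝ | |v| < 1} from h)]
      rw [heq]
      exact ((hf.comp (continuous_id.sub continuous_const)).sub hf).const_smul _
    · have heq : (fun t => hilbG f t u) = fun t => u⁻¹ • f (t - u) :=
        funext fun t => hilbG_eq_outer t u h
      rw [heq]
      exact (hf.comp (continuous_id.sub continuous_const)).const_smul _
lemma meas_le2 : MeasurableSet {v : ℝ | |v| ≤ 2} :=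
  measurableSet_le measurable_id.abs measurable_const

lemma meas_2le : MeasurableSet {v : ℝ | 2 ≤ |v|} :=
  measurableSet_le measurable_const measurable_id.abs

lemma vol_le2 : volume {v : ℝ | |v| ≤ 2} < ⊤ := by
  refine lt_of_le_of_lt (measure_mono ?_) (measure_Icc_lt_top (a := (-2:ℝ)) (b := 2))
  intro v hv
  exact Set.mem_Icc.mpr (abs_le.mp hv)

lemma cont_outer {f : ℝ → Z} (hf : Continuous f) {M : ℝ} (hM : ∀ x, ‖f x‖ ≤ M)
    (hL2 : MemLp f 2 volume) :
    Continuous (fun t => ∫ u in {v : ℝ | |v| < 1}ᶜ, hilbG f t u) := by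
  have hM0 : 0 ≤ M := (norm_nonneg (f 0)).trans (hM 0)
  rw [continuous_iff_continuousAt]
  intro t₀
  set K : ℝ → ℝ → Z := fun t v =>
    (if 1 ≤ |v + (t - t₀)| then (v + (t - t₀))⁻¹ else 0) • f (t₀ - v) with hK
  have hrepr : ∀ t, (∫ u in {v : ℝ | |v| < 1}ᶜ, hilbG f t u) = ∫ v, K t v := by
    intro t
    have h1 : (∫ u in {v : ℝ | |v| < 1}ᶜ, hilbG f t u)
        = ∫ u, Set.indicator {v : ℝ | |v| < 1}ᶜ (fun u => u⁻¹ • f (t - u)) u := by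
      rw [integral_indicator measB.compl]
      exact setIntegral_congr_fun measB.compl fun u hu => hilbG_eq_outer t u (by simpa using hu)
    rw [h1, ← integral_add_right_eq_self
      (fun u => Set.indicator {v : ℝ | |v| < 1}ᶜ (fun u => u⁻¹ • f (t - u)) u) (t - t₀)]
    congr 1
    funext v
    have harg : t - (v + (t - t₀)) = t₀ - v := by ring
    by_cases h : 1 ≤ |v + (t - t₀)|
    · rw [Set.indicator_of_mem (show v + (t - t₀) ∈ {v : ℝ | |v| < 1}ᶜ from by
        simp only [Set.mem_compl_iff, Set.mem_setOf_eq, not_lt]; exact h), harg]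
      simp only [hK, if_pos h]
    · rw [Set.indicator_of_notMem (show v + (t - t₀) ∉ {v : ℝ | |v| < 1}ᶜ from by
        intro hc; exact hc (not_le.mp h))]
      simp only [hK, if_neg h, zero_smul]
  have hconv : Tendsto (fun t => ∫ v, K t v) (𝓝 t₀) (𝓝 (∫ v, K t₀ v)) := by
    apply tendsto_integral_filter_of_dominated_convergence
      (bound := fun v => Set.indicator {v : ℝ | |v| ≤ 2} (fun _ => M) v
        + 2 * Set.indicator {v : ℝ | 2 ≤ |v|} (fun v : ℝ => (v ^ 2)⁻¹) v + ‖f (t₀ - v)‖ ^ 2)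
    · refine Eventually.of_forall fun t => ?_
      refine (StronglyMeasurable.smul ?_ ?_).aestronglyMeasurable
      · apply Measurable.stronglyMeasurable
        exact Measurable.ite
          (measurableSet_le measurable_const ((measurable_id.add_const (t - t₀)).abs))
          ((measurable_id.add_const (t - t₀)).inv) measurable_const
      · exact (hf.comp (continuous_const.sub continuous_id)).stronglyMeasurable
    · have hev : ∀ᶠ t in 𝓝 t₀, |t - t₀| < 1/2 := by
        have hb := Metric.ball_mem_nhds t₀ (by norm_num : (0:ℝ) < 1/2)
        filter_upwards [hb] with t ht
        simpa [Real.dist_eq] using ht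
      filter_upwards [hev] with t ht
      refine ae_of_all _ fun v => ?_
      have hb0 : 0 ≤ Set.indicator {v : ℝ | |v| ≤ 2} (fun _ => M) v :=
        Set.indicator_nonneg (fun _ _ => hM0) v
      have hb1 : 0 ≤ 2 * Set.indicator {v : ℝ | 2 ≤ |v|} (fun v : ℝ => (v ^ 2)⁻¹) v :=
        mul_nonneg (by norm_num) (Set.indicator_nonneg (fun x _ => by positivity) v)
      have hb2 : (0:ℝ) ≤ ‖f (t₀ - v)‖ ^ 2 := by positivity
      by_cases hv : |v| ≤ 2
      · have hKb : ‖K t v‖ ≤ M := by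
          rw [hK, norm_smul]
          by_cases hcond : 1 ≤ |v + (t - t₀)|
          · rw [if_pos hcond, Real.norm_eq_abs, abs_inv]
            have hle1 : |v + (t - t₀)|⁻¹ ≤ 1 := by
              rw [inv_le_one_iff₀]
              right; exact hcond
            calc |v + (t - t₀)|⁻¹ * ‖f (t₀ - v)‖ ≤ 1 * M :=
                  mul_le_mul hle1 (hM _) (norm_nonneg _) one_pos.le
              _ = M := one_mul M
          · rw [if_neg hcond]
            simpa using hM0
        refine hKb.trans ?_
        rw [Set.indicator_of_mem (show v ∈ {v : ℝ | |v| ≤ 2} from hv)]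
        linarith
      · push_neg at hv
        have hvpos : (0:ℝ) < |v| := by linarith
        have hvδ : |v|/2 ≤ |v + (t - t₀)| := by
          have h1 : |v| ≤ |v + (t - t₀)| + |t - t₀| := by
            have h := abs_add_le (v + (t - t₀)) (t₀ - t)
            have he : v + (t - t₀) + (t₀ - t) = v := by ring
            rw [he, abs_sub_comm t₀ t] at h
            exact h
          linarith
        have hscal : |if 1 ≤ |v + (t - t₀)| then (v + (t - t₀))⁻¹ else 0| ≤ 2/|v| := by
          by_cases hcond : 1 ≤ |v + (t - t₀)|
          · rw [if_pos hcond, abs_inv]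
            have h2 : (|v|/2)⁻¹ = 2/|v| := by
              field_simp
            rw [← h2]
            exact inv_anti₀ (by positivity) hvδ
          · rw [if_neg hcond, abs_zero]
            positivity
        have hKb : ‖K t v‖ ≤ (2/|v|) * ‖f (t₀ - v)‖ := by
          rw [hK, norm_smul, Real.norm_eq_abs]
          exact mul_le_mul_of_nonneg_right hscal (norm_nonneg _)
        have hAM : (2/|v|) * ‖f (t₀ - v)‖ ≤ ((2/|v|) ^ 2 + ‖f (t₀ - v)‖ ^ 2)/2 := amgm _ _
        have h2 : ((2/|v|) ^ 2)/2 = 2 * (v ^ 2)⁻¹ := by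
          rw [div_pow, sq_abs]
          ring
        rw [Set.indicator_of_mem (show v ∈ {v : ℝ | 2 ≤ |v|} from le_of_lt hv)]
        have := hKb.trans hAM
        linarith
    · refine (Integrable.add (Integrable.add ?_ ?_) ?_)
      · exact (integrable_indicator_iff meas_le2).mpr (integrableOn_const vol_le2.ne)
      · exact ((integrable_indicator_iff meas_2le).mpr (invsq_abs 2 two_pos)).const_mul 2
      · exact (fsq_integrable hL2).comp_sub_left t₀
    · have hae : ∀ᵐ v : ℝ, |v| ≠ 1 := by
        rw [ae_iff]
        refine measure_mono_null ?_ (((Set.finite_singleton (1:ℝ)).insert (-1)).measure_zero volume)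
        intro v hv
        simp only [Set.mem_setOf_eq, not_not] at hv
        rcases abs_eq (by norm_num : (0:ℝ) ≤ 1) |>.mp hv with h | h
        · right; simpa using h
        · left; simpa using h
      filter_upwards [hae] with v hv
      have hcont : Tendsto (fun t : ℝ => |v + (t - t₀)|) (𝓝 t₀) (𝓝 |v|) := by
        have hc : Continuous fun t : ℝ => |v + (t - t₀)| :=
          (continuous_const.add (continuous_id.sub continuous_const)).abs
        simpa using hc.tendsto t₀
      rcases lt_or_gt_of_ne hv with h1 | h1
      · have h0 : K t₀ v = 0 := by
          rw [hK]
          simp only [sub_self, add_zero]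
          rw [if_neg (not_le.mpr h1), zero_smul]
        rw [h0]
        have hev2 : ∀ᶠ t in 𝓝 t₀, K t v = 0 := by
          filter_upwards [hcont.eventually_lt_const h1] with t ht
          rw [hK]
          simp only [if_neg (not_le.mpr ht), zero_smul]
        exact Tendsto.congr' (hev2.mono fun t h => h.symm) tendsto_const_nhds
      · have hv0 : v ≠ 0 := by
          intro h
          rw [h, abs_zero] at h1
          linarith
        have hlim : Tendsto (fun t : ℝ => (v + (t - t₀))⁻¹ • f (t₀ - v)) (𝓝 t₀)
            (𝓝 (v⁻¹ • f (t₀ - v))) := by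
          have h2 : Tendsto (fun t : ℝ => v + (t - t₀)) (𝓝 t₀) (𝓝 v) := by
            have hc : Continuous fun t : ℝ => v + (t - t₀) :=
              continuous_const.add (continuous_id.sub continuous_const)
            simpa using hc.tendsto t₀
          exact (h2.inv₀ hv0).smul_const _
        have hKt₀ : K t₀ v = v⁻¹ • f (t₀ - v) := by
          rw [hK]
          simp only [sub_self, add_zero]
          rw [if_pos (le_of_lt h1)]
        rw [hKt₀]
        have hev2 : ∀ᶠ t in 𝓝 t₀, K t v = (v + (t - t₀))⁻¹ • f (t₀ - v) := by
          filter_upwards [hcont.eventually_const_lt h1] with t ht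
          rw [hK]
          simp only [if_pos (le_of_lt ht)]
        exact Tendsto.congr' (hev2.mono fun t h => h.symm) hlim
  have hgoal := hconv.congr fun t => (hrepr t).symm
  show Tendsto _ (𝓝 t₀) (𝓝 (∫ u in {v : ℝ | |v| < 1}ᶜ, hilbG f t₀ u))
  rw [hrepr t₀]
  exact hgoal

lemma hilbG_norm_bound {f : ℝ → Z} (hf : Continuous f) {L : ℝ} (hL0 : 0 ≤ L)
    (hLip : ∀ x y, ‖f x - f y‖ ≤ L * |x - y|) (hL2 : MemLp f 2 volume) (t : ℝ) :
    ‖∫ u, hilbG f t u‖ ≤ 2 * L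
      + ((∫ u in {v : ℝ | 1 ≤ |v|}, (u ^ 2)⁻¹) + ∫ u, ‖f u‖ ^ 2) / 2 := by
  have hint := hilbG_integrable hf hL0 hLip hL2 t
  rw [← integral_add_compl measB hint]
  refine (norm_add_le _ _).trans (add_le_add ?_ ?_)
  · have h := norm_setIntegral_le_of_norm_le_const volB_lt_top
      (fun u (hu : u ∈ {v : ℝ | |v| < 1}) => hilbG_bound_inner hL0 hLip t u hu)
    have hvol : (volume {v : ℝ | |v| < 1}).toReal = 2 := by
      have hB : {v : ℝ | |v| < 1} = Set.Ioo (-1 : ℝ) 1 := by ext v; simp [abs_lt]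
      rw [hB, Real.volume_Ioo]
      norm_num
    rw [Measure.real, hvol] at h
    linarith
  · have hC : {v : ℝ | |v| < 1}ᶜ = {u : ℝ | 1 ≤ |u|} := by ext u; simp [not_lt]
    rw [hC]
    have hfs : IntegrableOn (fun u : ℝ => ‖f (t - u)‖ ^ 2) {u : ℝ | 1 ≤ |u|} :=
      ((fsq_integrable hL2).comp_sub_left t).integrableOn
    have hiv := invsq_abs 1 one_pos
    refine (norm_integral_le_integral_norm _).trans ?_
    have hmono : (∫ u in {u : ℝ | 1 ≤ |u|}, ‖hilbG f t u‖)
        ≤ ∫ u in {u : ℝ | 1 ≤ |u|}, ((u ^ 2)⁻¹ + ‖f (t - u)‖ ^ 2) / 2 := by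
      refine setIntegral_mono_on hint.norm.integrableOn ((hiv.add hfs).div_const 2) measBc ?_
      intro u hu
      rw [hilbG_eq_outer t u (by simp only [not_lt]; exact hu)]
      exact outer_bound t u
    refine hmono.trans ?_
    rw [integral_div, integral_add hiv hfs]
    have htr : (∫ u in {u : ℝ | 1 ≤ |u|}, ‖f (t - u)‖ ^ 2) ≤ ∫ u, ‖f (t - u)‖ ^ 2 :=
      setIntegral_le_integral ((fsq_integrable hL2).comp_sub_left t)
        (ae_of_all _ fun u => by positivity)
    have htr2 : (∫ u, ‖f (t - u)‖ ^ 2) = ∫ u, ‖f u‖ ^ 2 :=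
      integral_sub_left_eq_self (fun u => ‖f u‖ ^ 2) volume t
    rw [htr2] at htr
    linarith

end

/-- For `f ∈ C_b¹(ℝ,Z) ∩ L²(ℝ,Z)` the principal-value limit
`Hf(t) = (1/π) lim_{ε→0} ∫_{ε<|t-s|<1/ε} f(s)/(t-s) ds` exists for every `t`,
and `Hf ∈ C_b(ℝ, Z)`. -/
theorem hilbert_transform_exists_and_bounded_continuous
    {Z : Type*} [NormedAddCommGroup Z] [NormedSpace ℝ Z] [CompleteSpace Z]
    (f : ℝ → Z) (hC1 : ContDiff ℝ 1 f)
    (hbdd : ∃ M : ℝ, ∀ t : ℝ, ‖f t‖ ≤ M)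
    (hbdd' : ∃ M : ℝ, ∀ t : ℝ, ‖deriv f t‖ ≤ M)
    (hL2 : MemLp f 2 volume) :
    ∃ H : ℝ → Z,
      (∀ t : ℝ, Tendsto
        (fun ε : ℝ => (Real.pi)⁻¹ •
          ∫ s in {s : ℝ | ε < |t - s| ∧ |t - s| < ε⁻¹}, (t - s)⁻¹ • f s)
        (𝓝[>] (0 : ℝ)) (𝓝 (H t))) ∧
      Continuous H ∧ ∃ M : ℝ, ∀ t : ℝ, ‖H t‖ ≤ M := by
  obtain ⟨M₀, hM₀⟩ := hbdd
  obtain ⟨M₁, hM₁⟩ := hbdd'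
  have hf : Continuous f := hC1.continuous
  set L : ℝ := max M₁ 0 with hLdef
  have hL0 : 0 ≤ L := le_max_right _ _
  have hLip : ∀ x y : ℝ, ‖f x - f y‖ ≤ L * |x - y| := by
    have hdiff : Differentiable ℝ f := hC1.differentiable one_ne_zero
    have hlip : LipschitzWith (Real.toNNReal L) f := by
      apply lipschitzWith_of_nnnorm_deriv_le hdiff
      intro x
      rw [← norm_toNNReal]
      exact Real.toNNReal_mono ((hM₁ x).trans (le_max_left _ _))
    intro x y
    have := hlip.dist_le_mul x y
    rwa [dist_eq_norm, Real.dist_eq, Real.coe_toNNReal L hL0] at this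
  refine ⟨fun t => (Real.pi)⁻¹ • ∫ u, hilbG f t u, ?_, ?_, ?_⟩
  · intro t
    have h2 := (tendsto_annulus hf hL0 hLip hL2 t).const_smul (Real.pi)⁻¹
    refine Filter.Tendsto.congr' ?_ h2
    filter_upwards [self_mem_nhdsWithin] with ε hε
    rw [annulus_eq hf hM₀ t ε hε]
  · have key : (fun t => (Real.pi)⁻¹ • ∫ u, hilbG f t u)
        = fun t => (Real.pi)⁻¹ • ((∫ u in {v : ℝ | |v| < 1}, hilbG f t u)
            + ∫ u in {v : ℝ | |v| < 1}ᶜ, hilbG f t u) := by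
      funext t
      rw [integral_add_compl measB (hilbG_integrable hf hL0 hLip hL2 t)]
    rw [key]
    exact ((cont_inner hf hL0 hLip).add (cont_outer hf hM₀ hL2)).const_smul _
  · refine ⟨|(Real.pi)⁻¹| * (2 * L
      + ((∫ u in {v : ℝ | 1 ≤ |v|}, (u ^ 2)⁻¹) + ∫ u, ‖f u‖ ^ 2) / 2), fun t => ?_⟩
    rw [norm_smul, Real.norm_eq_abs]
    exact mul_le_mul_of_nonneg_left (hilbG_norm_bound hf hL0 hLip hL2 t) (abs_nonneg _)
end

section
/- Let A₀, A₁, B₀, B₁, E, F be nontrivial Banach spaces with continuous embeddings A₀, A₁, B₀, B₁ ↪ E, let T : E → F be a bounded linear operator, and assume: A₀ and A₁ have separable preduals; E is separable and reflexive; (i) A₁, B₀ ↪ A₀ and A₀ ∩ B₁ ↪ A₁; (ii) T(B₁) ↪ T(A₁), meaning there is a constant C such that for every b ∈ B₁ there is a ∈ A₁ with Ta = Tb and ‖a‖_{A₁} ≤ C‖b‖_{B₁}. Then for every θ ∈ (0,1) and q ∈ [1,∞), T((B₀,B₁)_{θ,q}) ↪ T((A₀,A₁)_{θ,q}): there is a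 constant C' such that every b in the real interpolation space (B₀,B₁)_{θ,q} admits a ∈ (A₀,A₁)_{θ,q} with Ta = Tb in F and ‖a‖_{(A₀,A₁)_{θ,q}} ≤ C'‖b‖_{(B₀,B₁)_{θ,q}}. -/
open MeasureTheory Filter Topology Set
open scoped ENNReal

noncomputable section

/-- The K-functional of the couple realized by continuous inclusions `i0 : A₀ → E`,
`i1 : A₁ → E` into an ambient space: `K(t,x) = inf{‖a₀‖ + t‖a₁‖ : x = a₀ + a₁}`
(`∞` if `x ∉ A₀ + A₁`). -/
def Kfn {A0 A1 E : Type*} [NormedAddCommGroup A0] [NormedSpace ℝ A0]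
    [NormedAddCommGroup A1] [NormedSpace ℝ A1] [NormedAddCommGroup E] [NormedSpace ℝ E]
    (i0 : A0 →L[ℝ] E) (i1 : A1 →L[ℝ] E) (t : ℝ) (x : E) : ℝ≥0∞ :=
  ⨅ p : {p : A0 × A1 // i0 p.1 + i1 p.2 = x}, ENNReal.ofReal (‖p.1.1‖ + t * ‖p.1.2‖)

/-- The real interpolation norm `‖x‖_{θ,q} = (∫₀^∞ (t^{-θ} K(t,x))^q dt/t)^{1/q}`
of the couple `(A₀,A₁)` realized inside the ambient space `E`. -/
def interpNorm {A0 A1 E : Type*} [NormedAddCommGroup A0] [NormedSpace ℝ A0]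
    [NormedAddCommGroup A1] [NormedSpace ℝ A1] [NormedAddCommGroup E] [NormedSpace ℝ E]
    (θ q : ℝ) (i0 : A0 →L[ℝ] E) (i1 : A1 →L[ℝ] E) (x : E) : ℝ≥0∞ :=
  (∫⁻ t in Set.Ioi (0:ℝ),
      (ENNReal.ofReal (t ^ (-θ)) * Kfn i0 i1 t x) ^ q / ENNReal.ofReal t) ^ (1 / q)

section KfnLemmas

variable {A0 A1 E : Type*} [NormedAddCommGroup A0] [NormedSpace ℝ A0]
    [NormedAddCommGroup A1] [NormedSpace ℝ A1] [NormedAddCommGroup E] [NormedSpace ℝ E]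
    (i0 : A0 →L[ℝ] E) (i1 : A1 →L[ℝ] E)

lemma Kfn_le {t : ℝ} {x : E} {p0 : A0} {p1 : A1} (h : i0 p0 + i1 p1 = x) :
    Kfn i0 i1 t x ≤ ENNReal.ofReal (‖p0‖ + t * ‖p1‖) :=
  iInf_le _ (⟨(p0, p1), h⟩ : {p : A0 × A1 // i0 p.1 + i1 p.2 = x})

lemma Kfn_monotone (x : E) : Monotone (fun t => Kfn i0 i1 t x) := by
  intro t s hts
  exact iInf_mono fun p => ENNReal.ofReal_le_ofReal
    (add_le_add_right (mul_le_mul_of_nonneg_right hts (norm_nonneg _)) _)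

lemma Kfn_measurable (x : E) : Measurable (fun t => Kfn i0 i1 t x) :=
  (Kfn_monotone i0 i1 x).measurable

lemma Kfn_ne_top {t : ℝ} {x : E} {p0 : A0} {p1 : A1} (h : i0 p0 + i1 p1 = x) :
    Kfn i0 i1 t x ≠ ⊤ :=
  ne_top_of_le_ne_top ENNReal.ofReal_ne_top (Kfn_le i0 i1 h)

lemma Kfn_zero (t : ℝ) : Kfn i0 i1 t (0 : E) = 0 := by
  refine le_antisymm ?_ zero_le
  have h : i0 0 + i1 0 = (0 : E) := by simp
  have := Kfn_le i0 i1 (t := t) h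
  simpa using this

lemma le_Kfn_of_le_one {t : ℝ} (ht0 : 0 ≤ t) (ht1 : t ≤ 1) (x : E) :
    ENNReal.ofReal t * Kfn i0 i1 1 x ≤ Kfn i0 i1 t x := by
  refine le_iInf fun p => ?_
  have h1 : Kfn i0 i1 1 x ≤ ENNReal.ofReal (‖p.1.1‖ + 1 * ‖p.1.2‖) := Kfn_le i0 i1 p.2
  calc ENNReal.ofReal t * Kfn i0 i1 1 x
      ≤ ENNReal.ofReal t * ENNReal.ofReal (‖p.1.1‖ + 1 * ‖p.1.2‖) := by gcongr
    _ = ENNReal.ofReal (t * (‖p.1.1‖ + 1 * ‖p.1.2‖)) := (ENNReal.ofReal_mul ht0).symm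
    _ ≤ ENNReal.ofReal (‖p.1.1‖ + t * ‖p.1.2‖) := by
        refine ENNReal.ofReal_le_ofReal ?_
        have h0 := norm_nonneg p.1.1
        nlinarith [norm_nonneg p.1.2]

lemma eq_zero_of_Kfn_one_eq_zero {x : E} (h : Kfn i0 i1 1 x = 0) : x = 0 := by
  by_contra hx
  have hC : (0:ℝ) < ‖i0‖ + ‖i1‖ + 1 := by positivity
  have hε : (0:ℝ) < ‖x‖ / (‖i0‖ + ‖i1‖ + 1) := by
    apply div_pos (norm_pos_iff.mpr hx) hC
  have hlt : Kfn i0 i1 1 x < ENNReal.ofReal (‖x‖ / (‖i0‖ + ‖i1‖ + 1)) := by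
    rw [h]; exact ENNReal.ofReal_pos.mpr hε
  rw [Kfn, iInf_lt_iff] at hlt
  obtain ⟨p, hp⟩ := hlt
  rw [ENNReal.ofReal_lt_ofReal_iff hε] at hp
  have hx1 : ‖x‖ ≤ ‖i0‖ * ‖p.1.1‖ + ‖i1‖ * ‖p.1.2‖ := by
    calc ‖x‖ = ‖i0 p.1.1 + i1 p.1.2‖ := by rw [p.2]
      _ ≤ ‖i0 p.1.1‖ + ‖i1 p.1.2‖ := norm_add_le _ _
      _ ≤ ‖i0‖ * ‖p.1.1‖ + ‖i1‖ * ‖p.1.2‖ := by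
          gcongr <;> [exact i0.le_opNorm _; exact i1.le_opNorm _]
  have h00 := norm_nonneg p.1.1
  have h01 := norm_nonneg p.1.2
  have hn0 := norm_nonneg (i0 : A0 →L[ℝ] E)
  have hn1 := norm_nonneg (i1 : A1 →L[ℝ] E)
  have hxpos := norm_pos_iff.mpr hx
  rw [lt_div_iff₀ hC] at hp
  nlinarith

end KfnLemmas

lemma add_rpow_le_two_rpow (x y : ℝ≥0∞) {q : ℝ} (hq : 0 ≤ q) :
    (x + y) ^ q ≤ 2 ^ q * (x ^ q + y ^ q) := by
  rcases le_total x y with h | h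
  · calc (x + y) ^ q ≤ (2 * y) ^ q := by
          refine ENNReal.rpow_le_rpow ?_ hq
          rw [two_mul]; exact add_le_add_left h y
      _ = 2 ^ q * y ^ q := ENNReal.mul_rpow_of_nonneg _ _ hq
      _ ≤ 2 ^ q * (x ^ q + y ^ q) := by gcongr; exact le_add_self
  · calc (x + y) ^ q ≤ (2 * x) ^ q := by
          refine ENNReal.rpow_le_rpow ?_ hq
          rw [two_mul]; exact add_le_add_right h x
      _ = 2 ^ q * x ^ q := ENNReal.mul_rpow_of_nonneg _ _ hq
      _ ≤ 2 ^ q * (x ^ q + y ^ q) := by gcongr; exact le_add_right le_rfl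

set_option maxHeartbeats 2000000 in
/-- Interpolation of solutions of linear equations (Theorem on real interpolation of
images): under the stated hypotheses — separable preduals of `A₀`, `A₁`, separable
reflexive ambient `E`, the embeddings `A₁, B₀ ↪ A₀`, `A₀ ∩ B₁ ↪ A₁`, and the image
embedding `T(B₁) ↪ T(A₁)` — one has `T((B₀,B₁)_{θ,q}) ↪ T((A₀,A₁)_{θ,q})` for all
`θ ∈ (0,1)`, `q ∈ [1,∞)`. -/
theorem interpolation_of_solutions
    {A0 A1 B0 B1 E F : Type*}
    [NormedAddCommGroup A0] [NormedSpace ℝ A0] [CompleteSpace A0] [Nontrivial A0]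
    [NormedAddCommGroup A1] [NormedSpace ℝ A1] [CompleteSpace A1] [Nontrivial A1]
    [NormedAddCommGroup B0] [NormedSpace ℝ B0] [CompleteSpace B0] [Nontrivial B0]
    [NormedAddCommGroup B1] [NormedSpace ℝ B1] [CompleteSpace B1] [Nontrivial B1]
    [NormedAddCommGroup E] [NormedSpace ℝ E] [CompleteSpace E] [Nontrivial E]
    [NormedAddCommGroup F] [NormedSpace ℝ F] [CompleteSpace F] [Nontrivial F]
    -- `A₀` and `A₁` have separable preduals:
    {P0 P1 : Type*}
    [NormedAddCommGroup P0] [NormedSpace ℝ P0] [TopologicalSpace.SeparableSpace P0]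
    [NormedAddCommGroup P1] [NormedSpace ℝ P1] [TopologicalSpace.SeparableSpace P1]
    (hpre0 : Nonempty (A0 ≃ₗᵢ[ℝ] StrongDual ℝ P0))
    (hpre1 : Nonempty (A1 ≃ₗᵢ[ℝ] StrongDual ℝ P1))
    -- `E` is separable and reflexive:
    [TopologicalSpace.SeparableSpace E]
    (hrefl : Function.Surjective (NormedSpace.inclusionInDoubleDual ℝ E))
    -- the continuous embeddings into the ambient space `E`:
    (iA0 : A0 →L[ℝ] E) (iA1 : A1 →L[ℝ] E) (iB0 : B0 →L[ℝ] E) (iB1 : B1 →L[ℝ] E)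
    (hiA0 : Function.Injective iA0) (hiA1 : Function.Injective iA1)
    (hiB0 : Function.Injective iB0) (hiB1 : Function.Injective iB1)
    (T : E →L[ℝ] F)
    -- (i) `A₁ ↪ A₀`, `B₀ ↪ A₀`, and `A₀ ∩ B₁ ↪ A₁`:
    (hA1A0 : ∃ C : ℝ, 0 < C ∧ ∀ a1 : A1, ∃ a0 : A0, iA0 a0 = iA1 a1 ∧ ‖a0‖ ≤ C * ‖a1‖)
    (hB0A0 : ∃ C : ℝ, 0 < C ∧ ∀ b0 : B0, ∃ a0 : A0, iA0 a0 = iB0 b0 ∧ ‖a0‖ ≤ C * ‖b0‖)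
    (hInter : ∃ C : ℝ, 0 < C ∧ ∀ (a0 : A0) (b1 : B1), iA0 a0 = iB1 b1 →
      ∃ a1 : A1, iA1 a1 = iA0 a0 ∧ ‖a1‖ ≤ C * max ‖a0‖ ‖b1‖)
    -- (ii) `T(B₁) ↪ T(A₁)`:
    (hT : ∃ C : ℝ, 0 < C ∧ ∀ b : B1, ∃ a : A1, T (iA1 a) = T (iB1 b) ∧ ‖a‖ ≤ C * ‖b‖)
    (θ q : ℝ) (hθ : θ ∈ Set.Ioo (0:ℝ) 1) (hq : 1 ≤ q) :
    ∃ C' : ℝ, 0 < C' ∧ ∀ b : E, interpNorm θ q iB0 iB1 b ≠ ⊤ →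
      ∃ a : E, T a = T b ∧
        interpNorm θ q iA0 iA1 a ≤ ENNReal.ofReal C' * interpNorm θ q iB0 iB1 b := by
  obtain ⟨C0, hC0, hB0A0⟩ := hB0A0
  obtain ⟨CI, hCI, hInter⟩ := hInter
  obtain ⟨CT, hCT, hT⟩ := hT
  obtain ⟨C10, hC10, hA1A0⟩ := hA1A0
  obtain ⟨hθ0, hθ1⟩ := hθ
  have hq0 : (0:ℝ) < q := lt_of_lt_of_le one_pos hq
  have hqn : (0:ℝ) ≤ q := le_of_lt hq0
  have hqi : (0:ℝ) < 1/q := by positivity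
  set M : ℝ := C0 + C0*CI + CI + CT + 1 with hM_def
  have hM : 0 < M := by positivity
  set M' : ℝ := C0 + C10*CT + 1 with hM'_def
  have hM' : 0 < M' := by positivity
  set e : ℝ := (-θ)*q - 1 with he_def
  have he : e < -1 := by nlinarith
  set LL : ℝ≥0∞ := ∫⁻ t in Ioi (1:ℝ), ENNReal.ofReal (t ^ e) with hLL_def
  have hLLtop : LL ≠ ⊤ := by
    have hint : IntegrableOn (fun t : ℝ => t ^ e) (Ioi 1) :=
      integrableOn_Ioi_rpow_of_lt he one_pos
    have hfin := hint.2
    have hle : LL ≤ ∫⁻ t in Ioi (1:ℝ), (‖t ^ e‖₊ : ℝ≥0∞) :=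
      lintegral_mono fun t => Real.ofReal_le_enorm _
    exact ne_top_of_le_ne_top hfin.ne hle
  set l : ℝ := (2⁻¹:ℝ)^q * 2⁻¹ with hl_def
  have hl : 0 < l := by positivity
  set c1 : ℝ≥0∞ := ENNReal.ofReal (2*M) ^ q * 2 ^ q with hc1_def
  have hc1top : c1 ≠ ⊤ := ENNReal.mul_ne_top
    (ENNReal.rpow_ne_top_of_nonneg hqn ENNReal.ofReal_ne_top)
    (ENNReal.rpow_ne_top_of_nonneg hqn (by simp))
  set c2 : ℝ≥0∞ := ENNReal.ofReal (2*M') ^ q with hc2_def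
  have hc2top : c2 ≠ ⊤ := ENNReal.rpow_ne_top_of_nonneg hqn ENNReal.ofReal_ne_top
  set Cbig : ℝ≥0∞ := 2 * c1 + c2 * LL * ENNReal.ofReal l⁻¹ with hCbig_def
  have hCbigtop : Cbig ≠ ⊤ := by
    refine ENNReal.add_ne_top.mpr ⟨ENNReal.mul_ne_top (by simp) hc1top, ?_⟩
    exact ENNReal.mul_ne_top (ENNReal.mul_ne_top hc2top hLLtop) ENNReal.ofReal_ne_top
  refine ⟨Cbig.toReal ^ (1/q) + 1, by positivity, ?_⟩
  intro b hbfin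
  -- the decomposition set of b is nonempty
  have hne : ∃ p : B0 × B1, iB0 p.1 + iB1 p.2 = b := by
    by_contra hc
    push_neg at hc
    have hempty : IsEmpty {p : B0 × B1 // iB0 p.1 + iB1 p.2 = b} :=
      ⟨fun p => hc p.1 p.2⟩
    have hK : ∀ t : ℝ, Kfn iB0 iB1 t b = ⊤ := fun t => by
      rw [Kfn, iInf_of_empty]
    apply hbfin
    rw [interpNorm]
    have htop : ∀ t ∈ Ioi (0:ℝ),
        (ENNReal.ofReal (t^(-θ)) * Kfn iB0 iB1 t b)^q / ENNReal.ofReal t = ⊤ := by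
      intro t ht
      rw [hK t, ENNReal.mul_top (by
        simp only [ne_eq, ENNReal.ofReal_eq_zero, not_le]
        exact Real.rpow_pos_of_pos ht _),
        ENNReal.top_rpow_of_pos hq0, ENNReal.top_div_of_ne_top ENNReal.ofReal_ne_top]
    rw [setLIntegral_congr_fun measurableSet_Ioi htop]
    rw [setLIntegral_const, Real.volume_Ioi, ENNReal.top_mul (by simp)]
    exact ENNReal.top_rpow_of_pos hqi
  obtain ⟨⟨b0', b1'⟩, hbdec⟩ := hne
  have hκtop : Kfn iB0 iB1 1 b ≠ ⊤ := Kfn_ne_top _ _ hbdec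
  by_cases hκ0 : Kfn iB0 iB1 1 b = 0
  · -- then b = 0 and a = 0 works
    have hb0 : b = 0 := eq_zero_of_Kfn_one_eq_zero _ _ hκ0
    refine ⟨0, by rw [hb0], ?_⟩
    have hA0 : interpNorm θ q iA0 iA1 0 = 0 := by
      rw [interpNorm]
      have hz : ∀ t ∈ Ioi (0:ℝ),
          (ENNReal.ofReal (t^(-θ)) * Kfn iA0 iA1 t (0:E))^q / ENNReal.ofReal t = 0 := by
        intro t _
        rw [Kfn_zero, mul_zero, ENNReal.zero_rpow_of_pos hq0, ENNReal.zero_div]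
      rw [setLIntegral_congr_fun measurableSet_Ioi hz, lintegral_zero,
        ENNReal.zero_rpow_of_pos hqi]
    rw [hA0]
    exact zero_le
  -- main case
  set κ : ℝ≥0∞ := Kfn iB0 iB1 1 b with hκ_def
  set κr : ℝ := κ.toReal with hκr_def
  have hκr : 0 < κr := ENNReal.toReal_pos hκ0 hκtop
  have hκof : ENNReal.ofReal κr = κ := ENNReal.ofReal_toReal hκtop
  have hκqtop : κ ^ q ≠ ⊤ := ENNReal.rpow_ne_top_of_nonneg hqn hκtop
  -- selection of a decomposition at scale 1
  have hsel1 : ∃ p : {p : B0 × B1 // iB0 p.1 + iB1 p.2 = b},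
      ENNReal.ofReal (‖p.1.1‖ + 1 * ‖p.1.2‖) < 2 * κ := by
    rw [← iInf_lt_iff]
    have h1 : Kfn iB0 iB1 1 b < κ + κ := ENNReal.lt_add_right hκtop hκ0
    rw [← two_mul] at h1
    exact h1
  obtain ⟨⟨⟨b0, b1⟩, hb01⟩, hb01n⟩ := hsel1
  simp only at hb01n hb01
  have h2κ : (2:ℝ≥0∞) * κ = ENNReal.ofReal (2 * κr) := by
    rw [ENNReal.ofReal_mul (by norm_num), hκof]
    norm_num
  have hbnorm : ‖b0‖ + ‖b1‖ ≤ 2 * κr := by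
    rw [h2κ, ENNReal.ofReal_lt_ofReal_iff (by positivity)] at hb01n
    linarith
  obtain ⟨a1, hTa1, ha1n⟩ := hT b1
  obtain ⟨a0', ha0'eq, ha0'n⟩ := hB0A0 b0
  obtain ⟨abar, habar, habarn⟩ := hA1A0 a1
  set a : E := iA0 a0' + iA1 a1 with ha_def
  have hTa : T a = T b := by
    rw [ha_def, map_add, ha0'eq, hTa1, ← map_add, hb01]
  refine ⟨a, hTa, ?_⟩
  -- basic facts about Kfn of b
  have hKBfin : ∀ t : ℝ, Kfn iB0 iB1 t b ≠ ⊤ := fun t => Kfn_ne_top _ _ hb01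
  have hKBpos : ∀ t : ℝ, 0 < t → t ≤ 1 → 0 < Kfn iB0 iB1 t b := by
    intro t ht ht1
    refine lt_of_lt_of_le ?_ (le_Kfn_of_le_one _ _ ht.le ht1 b)
    exact ENNReal.mul_pos (ENNReal.ofReal_pos.mpr ht).ne' hκ0
  -- key pointwise estimate on (0,1]
  have keyA : ∀ t : ℝ, t ∈ Ioc (0:ℝ) 1 →
      Kfn iA0 iA1 t a ≤ ENNReal.ofReal (2*M) * (Kfn iB0 iB1 t b + ENNReal.ofReal t * κ) := by
    rintro t ⟨ht, ht1⟩
    have hKpos : 0 < Kfn iB0 iB1 t b := hKBpos t ht ht1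
    set Kt : ℝ := (Kfn iB0 iB1 t b).toReal with hKt_def
    have hKtpos : 0 < Kt := ENNReal.toReal_pos hKpos.ne' (hKBfin t)
    have hKteq : ENNReal.ofReal Kt = Kfn iB0 iB1 t b := ENNReal.ofReal_toReal (hKBfin t)
    -- selection at scale t
    have hselt : ∃ p : {p : B0 × B1 // iB0 p.1 + iB1 p.2 = b},
        ENNReal.ofReal (‖p.1.1‖ + t * ‖p.1.2‖) < 2 * Kfn iB0 iB1 t b := by
      rw [← iInf_lt_iff]
      have h1 : Kfn iB0 iB1 t b < Kfn iB0 iB1 t b + Kfn iB0 iB1 t b :=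
        ENNReal.lt_add_right (hKBfin t) hKpos.ne'
      rw [← two_mul] at h1
      exact h1
    obtain ⟨⟨⟨u, v⟩, huv⟩, huvn'⟩ := hselt
    simp only at huvn' huv
    have huvn : ‖u‖ + t*‖v‖ ≤ 2 * Kt := by
      rw [show (2:ℝ≥0∞) * Kfn iB0 iB1 t b = ENNReal.ofReal (2*Kt) by
            rw [ENNReal.ofReal_mul (by norm_num), hKteq]; norm_num,
          ENNReal.ofReal_lt_ofReal_iff (by positivity)] at huvn'
      linarith
    obtain ⟨w0, hw0eq, hw0n⟩ := hB0A0 (b0 - u)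
    have h1v : iB1 v = b - iB0 u := by rw [← huv]; abel
    have h2v : iB1 b1 = b - iB0 b0 := by rw [← hb01]; abel
    have hvb1 : iB1 (v - b1) = iA0 w0 := by
      rw [map_sub, hw0eq, map_sub, h1v, h2v]; abel
    obtain ⟨w1, hw1eq, hw1n⟩ := hInter w0 (v - b1) hvb1.symm
    obtain ⟨u0, hu0eq, hu0n⟩ := hB0A0 u
    have hdec : iA0 u0 + iA1 (w1 + a1) = a := by
      rw [map_add, hw1eq, ← hvb1, hu0eq, map_sub, h1v, h2v, ha_def, ha0'eq]
      abel
    calc Kfn iA0 iA1 t a ≤ ENNReal.ofReal (‖u0‖ + t * ‖w1 + a1‖) := Kfn_le _ _ hdec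
      _ ≤ ENNReal.ofReal (2*M*(Kt + t*κr)) := by
          refine ENNReal.ofReal_le_ofReal ?_
          have hw1a1 : t * ‖w1 + a1‖ ≤ t * (‖w1‖ + ‖a1‖) :=
            mul_le_mul_of_nonneg_left (norm_add_le _ _) ht.le
          have hmax : max ‖w0‖ ‖v - b1‖ ≤ C0*(‖b0‖ + ‖u‖) + (‖v‖ + ‖b1‖) := by
            refine max_le ?_ ?_
            · calc ‖w0‖ ≤ C0 * ‖b0 - u‖ := hw0n
                _ ≤ C0 * (‖b0‖ + ‖u‖) :=
                    mul_le_mul_of_nonneg_left (norm_sub_le _ _) hC0.le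
                _ ≤ C0*(‖b0‖ + ‖u‖) + (‖v‖ + ‖b1‖) :=
                    le_add_of_nonneg_right (by positivity)
            · calc ‖v - b1‖ ≤ ‖v‖ + ‖b1‖ := norm_sub_le _ _
                _ ≤ C0*(‖b0‖ + ‖u‖) + (‖v‖ + ‖b1‖) :=
                    le_add_of_nonneg_left (by positivity)
          have hw1' : ‖w1‖ ≤ CI * (C0*(‖b0‖ + ‖u‖) + (‖v‖ + ‖b1‖)) :=
            le_trans hw1n (mul_le_mul_of_nonneg_left hmax hCI.le)
          have htw1 : t * ‖w1‖ ≤ t * (CI * (C0*(‖b0‖ + ‖u‖) + (‖v‖ + ‖b1‖))) :=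
            mul_le_mul_of_nonneg_left hw1' ht.le
          have hta1 : t * ‖a1‖ ≤ t * (CT * ‖b1‖) :=
            mul_le_mul_of_nonneg_left ha1n ht.le
          have htu : t * ‖u‖ ≤ ‖u‖ := mul_le_of_le_one_left (norm_nonneg u) ht1
          have htb0 : t * ‖b0‖ ≤ t * (2*κr) :=
            mul_le_mul_of_nonneg_left (by nlinarith [norm_nonneg b1]) ht.le
          have htb1 : t * ‖b1‖ ≤ t * (2*κr) :=
            mul_le_mul_of_nonneg_left (by nlinarith [norm_nonneg b0]) ht.le
          have hun : ‖u‖ ≤ 2*Kt := by nlinarith [mul_nonneg ht.le (norm_nonneg v)]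
          have htv : t * ‖v‖ ≤ 2*Kt := by nlinarith [norm_nonneg u]
          have htu2 : t * ‖u‖ ≤ 2*Kt := htu.trans hun
          have hC0u : C0 * ‖u‖ ≤ C0 * (2*Kt) := mul_le_mul_of_nonneg_left hun hC0.le
          have p1 : CI*C0*(t*‖b0‖) ≤ CI*C0*(t*(2*κr)) :=
            mul_le_mul_of_nonneg_left htb0 (mul_nonneg hCI.le hC0.le)
          have p2 : CI*C0*(t*‖u‖) ≤ CI*C0*(2*Kt) :=
            mul_le_mul_of_nonneg_left htu2 (mul_nonneg hCI.le hC0.le)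
          have p3 : CI*(t*‖v‖) ≤ CI*(2*Kt) := mul_le_mul_of_nonneg_left htv hCI.le
          have p4 : CI*(t*‖b1‖) ≤ CI*(t*(2*κr)) := mul_le_mul_of_nonneg_left htb1 hCI.le
          have p5 : CT*(t*‖b1‖) ≤ CT*(t*(2*κr)) := mul_le_mul_of_nonneg_left htb1 hCT.le
          rw [hM_def]
          linarith [hu0n, hC0u, hw1a1, htw1, hta1, p1, p2, p3, p4, p5, hKtpos.le,
            mul_nonneg ht.le hκr.le, mul_nonneg hCT.le hKtpos.le,
            mul_nonneg hC0.le (mul_nonneg ht.le hκr.le)]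
      _ = ENNReal.ofReal (2*M) * (Kfn iB0 iB1 t b + ENNReal.ofReal t * κ) := by
          rw [ENNReal.ofReal_mul (by positivity),
            ENNReal.ofReal_add hKtpos.le (by positivity),
            ENNReal.ofReal_mul ht.le, hKteq, hκof]
  -- key pointwise estimate on (1,∞)
  have keyB : ∀ t : ℝ, t ∈ Ioi (1:ℝ) → Kfn iA0 iA1 t a ≤ ENNReal.ofReal (2*M') * κ := by
    intro t _
    have hdec : iA0 (a0' + abar) + iA1 0 = a := by
      rw [map_add, habar, map_zero, add_zero, ha_def]
    calc Kfn iA0 iA1 t a ≤ ENNReal.ofReal (‖a0' + abar‖ + t * ‖(0:A1)‖) := Kfn_le _ _ hdec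
      _ = ENNReal.ofReal ‖a0' + abar‖ := by simp
      _ ≤ ENNReal.ofReal (2*M'*κr) := by
          refine ENNReal.ofReal_le_ofReal ?_
          have h1 : ‖a0' + abar‖ ≤ ‖a0'‖ + ‖abar‖ := norm_add_le _ _
          have h2 : ‖abar‖ ≤ C10 * (CT * ‖b1‖) :=
            le_trans habarn (mul_le_mul_of_nonneg_left ha1n hC10.le)
          have q1 : ‖b0‖ ≤ 2*κr := by linarith [norm_nonneg b1]
          have q2 : ‖b1‖ ≤ 2*κr := by linarith [norm_nonneg b0]
          have q3 : C0*‖b0‖ ≤ C0*(2*κr) := mul_le_mul_of_nonneg_left q1 hC0.le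
          have q4 : C10*(CT*‖b1‖) ≤ C10*(CT*(2*κr)) :=
            mul_le_mul_of_nonneg_left (mul_le_mul_of_nonneg_left q2 hCT.le) hC10.le
          rw [hM'_def]
          linarith [h1, ha0'n, h2, q3, q4, hκr.le]
      _ = ENNReal.ofReal (2*M') * κ := by
          rw [ENNReal.ofReal_mul (by positivity), hκof]
  -- integrand abbreviations
  set fA : ℝ → ℝ≥0∞ := fun t =>
    (ENNReal.ofReal (t ^ (-θ)) * Kfn iA0 iA1 t a) ^ q / ENNReal.ofReal t with hfA_def
  set fB : ℝ → ℝ≥0∞ := fun t =>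
    (ENNReal.ofReal (t ^ (-θ)) * Kfn iB0 iB1 t b) ^ q / ENNReal.ofReal t with hfB_def
  set h0 : ℝ → ℝ≥0∞ := fun t =>
    (ENNReal.ofReal (t ^ (-θ)) * ENNReal.ofReal t) ^ q / ENNReal.ofReal t with hh0_def
  set IB : ℝ≥0∞ := ∫⁻ t in Ioi (0:ℝ), fB t with hIB_def
  have hfBm : Measurable fB := by
    rw [hfB_def]
    exact (((ENNReal.measurable_ofReal.comp (measurable_id.pow measurable_const)).mul
      (Kfn_measurable iB0 iB1 b)).pow measurable_const).div ENNReal.measurable_ofReal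
  -- pointwise bound on (0,1]
  have hpt1 : ∀ t ∈ Ioc (0:ℝ) 1, fA t ≤ c1 * (fB t + κ^q * h0 t) := by
    intro t ht
    have hfle : ENNReal.ofReal (t ^ (-θ)) * Kfn iA0 iA1 t a
        ≤ ENNReal.ofReal (2*M) * (ENNReal.ofReal (t ^ (-θ)) * Kfn iB0 iB1 t b
            + ENNReal.ofReal (t ^ (-θ)) * ENNReal.ofReal t * κ) := by
      calc ENNReal.ofReal (t ^ (-θ)) * Kfn iA0 iA1 t a
          ≤ ENNReal.ofReal (t ^ (-θ)) *
              (ENNReal.ofReal (2*M) * (Kfn iB0 iB1 t b + ENNReal.ofReal t * κ)) :=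
            mul_le_mul_right (keyA t ht) _
        _ = ENNReal.ofReal (2*M) * (ENNReal.ofReal (t ^ (-θ)) * Kfn iB0 iB1 t b
            + ENNReal.ofReal (t ^ (-θ)) * ENNReal.ofReal t * κ) := by ring
    simp only [hfA_def, hfB_def, hh0_def]
    calc (ENNReal.ofReal (t ^ (-θ)) * Kfn iA0 iA1 t a) ^ q / ENNReal.ofReal t
        ≤ (ENNReal.ofReal (2*M) * (ENNReal.ofReal (t ^ (-θ)) * Kfn iB0 iB1 t b
            + ENNReal.ofReal (t ^ (-θ)) * ENNReal.ofReal t * κ)) ^ q / ENNReal.ofReal t :=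
          ENNReal.div_le_div_right (ENNReal.rpow_le_rpow hfle hqn) _
      _ ≤ (ENNReal.ofReal (2*M)) ^ q * (2 ^ q *
            ((ENNReal.ofReal (t ^ (-θ)) * Kfn iB0 iB1 t b) ^ q
            + (ENNReal.ofReal (t ^ (-θ)) * ENNReal.ofReal t * κ) ^ q)) / ENNReal.ofReal t := by
          rw [ENNReal.mul_rpow_of_nonneg _ _ hqn]
          exact ENNReal.div_le_div_right
            (mul_le_mul_right (add_rpow_le_two_rpow _ _ hqn) _) _
      _ = c1 * ((ENNReal.ofReal (t ^ (-θ)) * Kfn iB0 iB1 t b) ^ q / ENNReal.ofReal t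
            + κ^q * ((ENNReal.ofReal (t ^ (-θ)) * ENNReal.ofReal t) ^ q / ENNReal.ofReal t)) := by
          rw [hc1_def, show (ENNReal.ofReal (t ^ (-θ)) * ENNReal.ofReal t * κ) ^ q
              = κ ^ q * (ENNReal.ofReal (t ^ (-θ)) * ENNReal.ofReal t) ^ q by
                rw [ENNReal.mul_rpow_of_nonneg _ _ hqn]; ring]
          simp only [div_eq_mul_inv]; ring
  -- pointwise bound on (1,∞)
  have hpt2 : ∀ t ∈ Ioi (1:ℝ), fA t ≤ c2 * κ^q * ENNReal.ofReal (t ^ e) := by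
    intro t ht
    have ht0 : (0:ℝ) < t := lt_trans one_pos ht
    have hXq : (ENNReal.ofReal (t ^ (-θ))) ^ q / ENNReal.ofReal t = ENNReal.ofReal (t ^ e) := by
      rw [ENNReal.ofReal_rpow_of_nonneg (Real.rpow_nonneg ht0.le _) hqn,
        ← Real.rpow_mul ht0.le, ← ENNReal.ofReal_div_of_pos ht0, he_def,
        Real.rpow_sub ht0, Real.rpow_one]
    calc fA t ≤ (ENNReal.ofReal (t ^ (-θ)) * (ENNReal.ofReal (2*M') * κ)) ^ q
          / ENNReal.ofReal t := by
          simp only [hfA_def]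
          exact ENNReal.div_le_div_right
            (ENNReal.rpow_le_rpow (mul_le_mul_right (keyB t ht) _) hqn) _
      _ = c2 * κ^q * ((ENNReal.ofReal (t ^ (-θ))) ^ q / ENNReal.ofReal t) := by
          rw [hc2_def, ENNReal.mul_rpow_of_nonneg _ _ hqn, ENNReal.mul_rpow_of_nonneg _ _ hqn]
          simp only [div_eq_mul_inv]; ring
      _ = c2 * κ^q * ENNReal.ofReal (t ^ e) := by rw [hXq]
  -- lower bound for IB in terms of κ
  have hlow : κ^q * ∫⁻ t in Ioc (0:ℝ) 1, h0 t ≤ IB := by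
    rw [hIB_def, ← lintegral_const_mul' _ _ hκqtop]
    refine le_trans (lintegral_mono_ae ?_)
      (lintegral_mono' (Measure.restrict_mono Ioc_subset_Ioi_self le_rfl) (le_refl fB))
    rw [ae_restrict_iff' measurableSet_Ioc]
    refine ae_of_all _ ?_
    intro t ht
    simp only [hfB_def, hh0_def]
    have h1 : ENNReal.ofReal (t ^ (-θ)) * ENNReal.ofReal t * κ
        ≤ ENNReal.ofReal (t ^ (-θ)) * Kfn iB0 iB1 t b := by
      rw [mul_assoc]
      exact mul_le_mul_right (le_Kfn_of_le_one _ _ ht.1.le ht.2 b) _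
    calc κ^q * ((ENNReal.ofReal (t ^ (-θ)) * ENNReal.ofReal t) ^ q / ENNReal.ofReal t)
        = (ENNReal.ofReal (t ^ (-θ)) * ENNReal.ofReal t * κ) ^ q / ENNReal.ofReal t := by
          rw [ENNReal.mul_rpow_of_nonneg (ENNReal.ofReal (t ^ (-θ)) * ENNReal.ofReal t) κ hqn,
            ENNReal.mul_rpow_of_nonneg (ENNReal.ofReal (t ^ (-θ))) (ENNReal.ofReal t) hqn]
          simp only [div_eq_mul_inv]; ring
      _ ≤ (ENNReal.ofReal (t ^ (-θ)) * Kfn iB0 iB1 t b) ^ q / ENNReal.ofReal t :=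
          ENNReal.div_le_div_right (ENNReal.rpow_le_rpow h1 hqn) _
  -- lower bound for the elementary integral
  have hptc : ∀ t ∈ Ioc (2⁻¹:ℝ) 1, ENNReal.ofReal ((2⁻¹:ℝ)^q) ≤ h0 t := by
    intro t ht
    have ht0 : (0:ℝ) < t := lt_trans (by norm_num) ht.1
    simp only [hh0_def]
    have hXd : ENNReal.ofReal (t ^ (-θ)) * ENNReal.ofReal t = ENNReal.ofReal (t ^ (1-θ)) := by
      rw [← ENNReal.ofReal_mul (Real.rpow_nonneg ht0.le _)]
      congr 1
      rw [show (1:ℝ)-θ = -θ + 1 by ring, Real.rpow_add ht0, Real.rpow_one]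
    rw [hXd, ENNReal.ofReal_rpow_of_nonneg (Real.rpow_nonneg ht0.le _) hqn,
      ← ENNReal.ofReal_div_of_pos ht0]
    refine ENNReal.ofReal_le_ofReal ?_
    have h1 : t ≤ t ^ (1-θ) := by
      calc t = t ^ (1:ℝ) := (Real.rpow_one t).symm
        _ ≤ t ^ (1-θ) := Real.rpow_le_rpow_of_exponent_ge ht0 ht.2 (by linarith)
    have h2 : (2⁻¹:ℝ) ≤ t ^ (1-θ) := le_trans ht.1.le h1
    have h3 : (2⁻¹:ℝ)^q ≤ (t ^ (1-θ))^q := Real.rpow_le_rpow (by norm_num) h2 hqn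
    rw [le_div_iff₀ ht0]
    calc (2⁻¹:ℝ)^q * t ≤ (2⁻¹:ℝ)^q * 1 :=
          mul_le_mul_of_nonneg_left ht.2 (by positivity)
      _ = (2⁻¹:ℝ)^q := mul_one _
      _ ≤ (t ^ (1-θ))^q := h3
  have hL0 : ENNReal.ofReal l ≤ ∫⁻ t in Ioc (0:ℝ) 1, h0 t := by
    have hsub : (∫⁻ t in Ioc (2⁻¹:ℝ) 1, h0 t) ≤ ∫⁻ t in Ioc (0:ℝ) 1, h0 t :=
      lintegral_mono' (Measure.restrict_mono (Ioc_subset_Ioc_left (by norm_num)) le_rfl) le_rfl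
    refine le_trans ?_ hsub
    calc ENNReal.ofReal l = ENNReal.ofReal ((2⁻¹:ℝ)^q) * volume (Ioc (2⁻¹:ℝ) 1) := by
          rw [Real.volume_Ioc, ← ENNReal.ofReal_mul (by positivity), hl_def]
          norm_num
      _ = ∫⁻ _ in Ioc (2⁻¹:ℝ) 1, ENNReal.ofReal ((2⁻¹:ℝ)^q) := (setLIntegral_const _ _).symm
      _ ≤ ∫⁻ t in Ioc (2⁻¹:ℝ) 1, h0 t := by
          refine lintegral_mono_ae ?_
          rw [ae_restrict_iff' measurableSet_Ioc]
          exact ae_of_all _ hptc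
  -- assembly
  have hIoc : (∫⁻ t in Ioc (0:ℝ) 1, fA t) ≤ 2 * c1 * IB := by
    calc (∫⁻ t in Ioc (0:ℝ) 1, fA t)
        ≤ ∫⁻ t in Ioc (0:ℝ) 1, c1 * (fB t + κ^q * h0 t) := by
          refine lintegral_mono_ae ?_
          rw [ae_restrict_iff' measurableSet_Ioc]
          exact ae_of_all _ hpt1
      _ = c1 * ∫⁻ t in Ioc (0:ℝ) 1, (fB t + κ^q * h0 t) := lintegral_const_mul' _ _ hc1top
      _ = c1 * ((∫⁻ t in Ioc (0:ℝ) 1, fB t) + ∫⁻ t in Ioc (0:ℝ) 1, κ^q * h0 t) := by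
          rw [lintegral_add_left hfBm]
      _ = c1 * ((∫⁻ t in Ioc (0:ℝ) 1, fB t) + κ^q * ∫⁻ t in Ioc (0:ℝ) 1, h0 t) := by
          rw [lintegral_const_mul' _ _ hκqtop]
      _ ≤ c1 * (IB + IB) := by
          refine mul_le_mul_right (add_le_add ?_ hlow) c1
          rw [hIB_def]
          exact lintegral_mono' (Measure.restrict_mono Ioc_subset_Ioi_self le_rfl) le_rfl
      _ = 2 * c1 * IB := by ring
  have hκqIB : κ^q ≤ ENNReal.ofReal l⁻¹ * IB := by
    have h1 : κ^q * ENNReal.ofReal l ≤ IB := le_trans (mul_le_mul_right hL0 _) hlow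
    calc κ^q = κ^q * ENNReal.ofReal l * ENNReal.ofReal l⁻¹ := by
          rw [mul_assoc, ← ENNReal.ofReal_mul hl.le, mul_inv_cancel₀ hl.ne',
            ENNReal.ofReal_one, mul_one]
      _ ≤ IB * ENNReal.ofReal l⁻¹ := mul_le_mul_left h1 _
      _ = ENNReal.ofReal l⁻¹ * IB := mul_comm _ _
  have hIoi : (∫⁻ t in Ioi (1:ℝ), fA t) ≤ c2 * LL * (ENNReal.ofReal l⁻¹ * IB) := by
    calc (∫⁻ t in Ioi (1:ℝ), fA t)
        ≤ ∫⁻ t in Ioi (1:ℝ), c2 * κ^q * ENNReal.ofReal (t ^ e) := by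
          refine lintegral_mono_ae ?_
          rw [ae_restrict_iff' measurableSet_Ioi]
          exact ae_of_all _ hpt2
      _ = c2 * κ^q * LL := by
          rw [lintegral_const_mul' _ _ (ENNReal.mul_ne_top hc2top hκqtop), hLL_def]
      _ = c2 * LL * κ^q := by ring
      _ ≤ c2 * LL * (ENNReal.ofReal l⁻¹ * IB) := mul_le_mul_right hκqIB _
  have hfinal : (∫⁻ t in Ioi (0:ℝ), fA t) ≤ Cbig * IB := by
    calc (∫⁻ t in Ioi (0:ℝ), fA t)
        = (∫⁻ t in Ioc (0:ℝ) 1, fA t) + ∫⁻ t in Ioi (1:ℝ), fA t := by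
          rw [← Ioc_union_Ioi_eq_Ioi (zero_le_one (α := ℝ)),
            Measure.restrict_union (Ioc_disjoint_Ioi le_rfl) measurableSet_Ioi,
            lintegral_add_measure]
      _ ≤ 2 * c1 * IB + c2 * LL * (ENNReal.ofReal l⁻¹ * IB) := add_le_add hIoc hIoi
      _ = Cbig * IB := by rw [hCbig_def]; ring
  -- conclusion
  have hIAe : interpNorm θ q iA0 iA1 a = (∫⁻ t in Ioi (0:ℝ), fA t) ^ (1/q) := by
    rw [interpNorm]
  have hIBe : interpNorm θ q iB0 iB1 b = IB ^ (1/q) := by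
    rw [interpNorm]
  rw [hIAe, hIBe]
  have hCpow : Cbig ^ (1/q) = ENNReal.ofReal (Cbig.toReal ^ (1/q)) := by
    conv_lhs => rw [← ENNReal.ofReal_toReal hCbigtop]
    rw [ENNReal.ofReal_rpow_of_nonneg ENNReal.toReal_nonneg hqi.le]
  calc (∫⁻ t in Ioi (0:ℝ), fA t) ^ (1/q) ≤ (Cbig * IB) ^ (1/q) :=
        ENNReal.rpow_le_rpow hfinal hqi.le
    _ = Cbig ^ (1/q) * IB ^ (1/q) := ENNReal.mul_rpow_of_nonneg _ _ hqi.le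
    _ ≤ ENNReal.ofReal (Cbig.toReal ^ (1/q) + 1) * IB ^ (1/q) := by
        gcongr
        rw [hCpow]
        exact ENNReal.ofReal_le_ofReal (le_add_of_nonneg_right zero_le_one)
end
end
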